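/- arXiv:1908.08636 — 3 statements merged into one kernel-verified Lean document; each statement's English description precedes it below -/
import Mathlib

section
/- For coherence spaces, if two coherence spaces are interleaving bisimilar then they are history preserving bisimilar. -/
/-- A labelled prime event structure over alphabet `A`. -/
structure PES (A : Type*) where
  E : Type*
  le : E → E → Prop
  conflict : E → E → Prop
  lab : E → A
  le_refl : ∀ e, le e e
  le_trans : ∀ e e' e'', le e e' → le e' e'' → le e e''
  le_antisymm : ∀ e e', le e e' → le e' e → e = e'
  finite_past : ∀ e, Set.Finite {e' | le e' e ∧ e' ≠ e}
  conflict_irrefl : ∀ e, ¬ conflict e e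
  conflict_symm : ∀ e e', conflict e e' → conflict e' e
  conflict_inherit : ∀ e e' e'', le e e' → e ≠ e' → conflict e e'' → conflict e' e''

namespace PES

variable {A : Type*}

/-- A coherence space: a PES with empty (strict) causality. -/
def IsCS (P : PES A) : Prop := ∀ e e', P.le e e' → e = e'

/-- An elementary event structure: a PES with empty conflict. -/
def IsEES (P : PES A) : Prop := ∀ e e', ¬ P.conflict e e'

/-- Concurrency. -/
def co (P : PES A) (e e' : P.E) : Prop :=
  ¬ P.le e e' ∧ ¬ P.le e' e ∧ ¬ P.conflict e e'

/-- Configurations: finite, conflict-free, downward-closed sets of events. -/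
def Config (P : PES A) (X : Set P.E) : Prop :=
  X.Finite ∧ (∀ e ∈ X, ∀ e' ∈ X, ¬ P.conflict e e') ∧
    (∀ e ∈ X, ∀ e', P.le e' e → e' ∈ X)

/-- Single-event labelled transition between configurations. -/
def Trans (P : PES A) (X : Set P.E) (a : A) (X' : Set P.E) : Prop :=
  P.Config X ∧ P.Config X' ∧ ∃ e, e ∉ X ∧ X' = insert e X ∧ P.lab e = a

/-- `X` can perform the sequential trace `w`. -/
def TraceFrom (P : PES A) : Set P.E → List A → Prop
  | X, [] => P.Config X
  | X, a :: w => ∃ X', P.Trans X a X' ∧ P.TraceFrom X' w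

/-- Sequential traces of a PES. -/
def STr (P : PES A) (w : List A) : Prop := P.TraceFrom ∅ w

/-- Interleaving trace equivalence. -/
def ITrEq (P Q : PES A) : Prop := ∀ w : List A, P.STr w ↔ Q.STr w

/-- Interleaving bisimulation. -/
def IBisim (P Q : PES A) (R : Set P.E → Set Q.E → Prop) : Prop :=
  R ∅ ∅ ∧ ∀ X Y, R X Y →
    (∀ a X', P.Trans X a X' → ∃ Y', Q.Trans Y a Y' ∧ R X' Y') ∧
    (∀ a Y', Q.Trans Y a Y' → ∃ X', P.Trans X a X' ∧ R X' Y')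

/-- Interleaving bisimilarity. -/
def IBisimilar (P Q : PES A) : Prop := ∃ R, IBisim P Q R

/-- Step transition, labelled by the multiset of labels of a nonempty set of
pairwise concurrent events added at once. -/
def StepTrans (P : PES A) (X : Set P.E) (m : Multiset A) (X' : Set P.E) : Prop :=
  P.Config X ∧ P.Config X' ∧ X ⊆ X' ∧ ∃ G : Finset P.E, ↑G = X' \ X ∧ G.Nonempty ∧
    (∀ e ∈ G, ∀ e' ∈ G, e ≠ e' → P.co e e') ∧ Multiset.map P.lab G.val = m

/-- `X` can perform the step trace `s`. -/
def StepTraceFrom (P : PES A) : Set P.E → List (Multiset A) → Prop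
  | X, [] => P.Config X
  | X, m :: s => ∃ X', P.StepTrans X m X' ∧ P.StepTraceFrom X' s

/-- Step traces of a PES. -/
def StTr (P : PES A) (s : List (Multiset A)) : Prop := P.StepTraceFrom ∅ s

/-- Step trace equivalence. -/
def STrEq (P Q : PES A) : Prop := ∀ s : List (Multiset A), P.StTr s ↔ Q.StTr s

/-- Step bisimulation. -/
def SBisim (P Q : PES A) (R : Set P.E → Set Q.E → Prop) : Prop :=
  R ∅ ∅ ∧ ∀ X Y, R X Y →
    (∀ m X', P.StepTrans X m X' → ∃ Y', Q.StepTrans Y m Y' ∧ R X' Y') ∧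
    (∀ m Y', Q.StepTrans Y m Y' → ∃ X', P.StepTrans X m X' ∧ R X' Y')

/-- Step bisimilarity. -/
def SBisimilar (P Q : PES A) : Prop := ∃ R, SBisim P Q R

/-- `f` restricts to a label-preserving order-isomorphism from `X` onto `Y`. -/
def IsoOn (P Q : PES A) (f : P.E → Q.E) (X : Set P.E) (Y : Set Q.E) : Prop :=
  Set.BijOn f X Y ∧ (∀ e ∈ X, ∀ e' ∈ X, (P.le e e' ↔ Q.le (f e) (f e'))) ∧
    ∀ e ∈ X, Q.lab (f e) = P.lab e

/-- The labelled posets induced by `X` and `Y` are isomorphic (same pomset). -/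
def PIso (P Q : PES A) (X : Set P.E) (Y : Set Q.E) : Prop :=
  ∃ f, IsoOn P Q f X Y

/-- Pomset trace equivalence: same sets of pomsets of configurations. -/
def PTrEq (P Q : PES A) : Prop :=
  (∀ X, P.Config X → ∃ Y, Q.Config Y ∧ PIso P Q X Y) ∧
  (∀ Y, Q.Config Y → ∃ X, P.Config X ∧ PIso P Q X Y)

/-- Pomset transition: strictly extending a configuration. -/
def PomTrans (P : PES A) (X X' : Set P.E) : Prop :=
  P.Config X ∧ P.Config X' ∧ X ⊂ X'

/-- Pomset bisimulation: matched extensions must add isomorphic pomsets. -/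
def PBisim (P Q : PES A) (R : Set P.E → Set Q.E → Prop) : Prop :=
  R ∅ ∅ ∧ ∀ X Y, R X Y →
    (∀ X', P.PomTrans X X' →
      ∃ Y', Q.PomTrans Y Y' ∧ PIso P Q (X' \ X) (Y' \ Y) ∧ R X' Y') ∧
    (∀ Y', Q.PomTrans Y Y' →
      ∃ X', P.PomTrans X X' ∧ PIso P Q (X' \ X) (Y' \ Y) ∧ R X' Y')

/-- Pomset bisimilarity. -/
def PBisimilar (P Q : PES A) : Prop := ∃ R, PBisim P Q R

/-- Weak history preserving bisimulation. -/
def WHBisim (P Q : PES A) (R : Set P.E → Set Q.E → Prop) : Prop :=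
  R ∅ ∅ ∧ ∀ X Y, R X Y → PIso P Q X Y ∧
    (∀ a X', P.Trans X a X' → ∃ Y', Q.Trans Y a Y' ∧ R X' Y') ∧
    (∀ a Y', Q.Trans Y a Y' → ∃ X', P.Trans X a X' ∧ R X' Y')

/-- Weak history preserving bisimilarity. -/
def WHBisimilar (P Q : PES A) : Prop := ∃ R, WHBisim P Q R

/-- History preserving bisimulation: triples `(X, Y, f)`. -/
def HBisim (P Q : PES A) (R : Set P.E → Set Q.E → (P.E → Q.E) → Prop) : Prop :=
  (∃ f, R ∅ ∅ f) ∧ ∀ X Y f, R X Y f → IsoOn P Q f X Y ∧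
    (∀ a X', P.Trans X a X' →
      ∃ Y' f', Q.Trans Y a Y' ∧ R X' Y' f' ∧ ∀ e ∈ X, f' e = f e) ∧
    (∀ a Y', Q.Trans Y a Y' →
      ∃ X' f', P.Trans X a X' ∧ R X' Y' f' ∧ ∀ e ∈ X, f' e = f e)

/-- History preserving bisimilarity. -/
def HBisimilar (P Q : PES A) : Prop := ∃ R, HBisim P Q R

/-- Closure under backward transitions, as needed for hereditary hp-bisimulations. -/
def Hereditary (P Q : PES A) (R : Set P.E → Set Q.E → (P.E → Q.E) → Prop) : Prop :=
  ∀ X Y f, R X Y f →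
    (∀ a X', P.Trans X' a X → R X' (f '' X') f) ∧
    (∀ a Y', Q.Trans Y' a Y → R {e ∈ X | f e ∈ Y'} Y' f)

/-- Hereditary history preserving bisimilarity. -/
def HHBisimilar (P Q : PES A) : Prop := ∃ R, HBisim P Q R ∧ Hereditary P Q R

/-- Isomorphism of PESs. -/
def Iso (P Q : PES A) : Prop :=
  ∃ f : P.E ≃ Q.E, (∀ e e', P.le e e' ↔ Q.le (f e) (f e')) ∧
    (∀ e e', P.conflict e e' ↔ Q.conflict (f e) (f e')) ∧
    ∀ e, Q.lab (f e) = P.lab e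

end PES



open Classical in
private lemma cs_le_iff {A : Type*} (P : PES A) (hP : P.IsCS) (e e' : P.E) :
    P.le e e' ↔ e = e' :=
  ⟨fun h => hP e e' h, fun h => h ▸ P.le_refl e⟩

open Classical in
private lemma iso_extend {A : Type*} (P Q : PES A) (hP : P.IsCS) (hQ : Q.IsCS)
    {f : P.E → Q.E} {X : Set P.E} {Y : Set Q.E}
    (hf : PES.IsoOn P Q f X Y) {e : P.E} {e' : Q.E}
    (he : e ∉ X) (he' : e' ∉ Y) (hl : Q.lab e' = P.lab e) :
    PES.IsoOn P Q (Function.update f e e') (insert e X) (insert e' Y) := by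
  classical
  obtain ⟨⟨hmap, hinj, hsurj⟩, hord, hlab⟩ := hf
  set g := Function.update f e e' with hg
  have hge : g e = e' := Function.update_self _ _ _
  have hgx : ∀ x ∈ X, g x = f x := by
    intro x hx
    have : x ≠ e := fun hxe => he (hxe ▸ hx)
    simp [hg, Function.update_of_ne this]
  have hmaps : Set.MapsTo g (insert e X) (insert e' Y) := by
    intro x hx
    rcases hx with rfl | hx
    · rw [hge]; exact Set.mem_insert _ _
    · rw [hgx x hx]; exact Set.mem_insert_of_mem _ (hmap hx)
  have hinjg : Set.InjOn g (insert e X) := by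
    intro x hx y hy hxy
    rcases hx with rfl | hx <;> rcases hy with rfl | hy
    · rfl
    · rw [hge, hgx y hy] at hxy; exact absurd (hxy ▸ hmap hy) he'
    · rw [hge, hgx x hx] at hxy; exact absurd (hxy ▸ hmap hx) he'
    · exact hinj hx hy (by rwa [hgx x hx, hgx y hy] at hxy)
  refine ⟨⟨hmaps, hinjg, ?_⟩, ?_, ?_⟩
  · intro y hy
    rcases hy with rfl | hy
    · exact ⟨e, Set.mem_insert _ _, hge⟩
    · obtain ⟨x, hx, hfx⟩ := hsurj hy
      exact ⟨x, Set.mem_insert_of_mem _ hx, by rw [hgx x hx]; exact hfx⟩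
  · intro a ha b hb
    rw [cs_le_iff P hP, cs_le_iff Q hQ]
    exact ⟨fun hab => hab ▸ rfl, fun hab => hinjg ha hb hab⟩
  · intro x hx
    rcases hx with rfl | hx
    · rw [hge]; exact hl
    · rw [hgx x hx]; exact hlab x hx

theorem cs_ib_implies_hb {A : Type*} (P Q : PES A) (hP : P.IsCS) (hQ : Q.IsCS)
    (h : PES.IBisimilar P Q) : PES.HBisimilar P Q := by
  classical
  obtain ⟨R, hR0, hRstep⟩ := h
  refine ⟨fun X Y f => R X Y ∧ PES.IsoOn P Q f X Y, ?_, ?_⟩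
  · -- base: need some function P.E → Q.E
    have hfex : ∃ f : P.E → Q.E, True := by
      by_cases hE : Nonempty P.E
      · obtain ⟨e0⟩ := hE
        have htr : P.Trans ∅ (P.lab e0) {e0} := by
          refine ⟨⟨Set.finite_empty, by simp, by simp⟩,
            ⟨Set.finite_singleton e0, ?_, ?_⟩, e0, by simp, by simp, rfl⟩
          · intro a ha b hb
            rw [Set.mem_singleton_iff] at ha hb
            subst ha; subst hb; exact P.conflict_irrefl _
          · intro a ha b hb
            rw [Set.mem_singleton_iff] at ha
            subst ha
            rw [Set.mem_singleton_iff]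
            exact hP b _ hb
        obtain ⟨Y', hY', _⟩ := (hRstep ∅ ∅ hR0).1 (P.lab e0) {e0} htr
        obtain ⟨_, _, e', _⟩ := hY'
        exact ⟨fun _ => e', trivial⟩
      · exact ⟨fun x => absurd ⟨x⟩ hE, trivial⟩
    obtain ⟨f, -⟩ := hfex
    refine ⟨f, hR0, ?_, ?_, ?_⟩
    · exact ⟨fun x hx => absurd hx (Set.notMem_empty x),
        fun x hx => absurd hx (Set.notMem_empty x),
        fun y hy => absurd hy (Set.notMem_empty y)⟩
    · intro a ha; exact absurd ha (Set.notMem_empty a)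
    · intro a ha; exact absurd ha (Set.notMem_empty a)
  · rintro X Y f ⟨hRXY, hiso⟩
    refine ⟨hiso, ?_, ?_⟩
    · intro a X' htr
      obtain ⟨Y', htrY, hRX'Y'⟩ := (hRstep X Y hRXY).1 a X' htr
      obtain ⟨_, _, e, heX, hX', hle⟩ := htr
      obtain ⟨e', heY, hY', hle'⟩ := htrY.2.2
      refine ⟨Y', Function.update f e e', htrY, ⟨hRX'Y', ?_⟩, ?_⟩
      · rw [hX', hY']
        exact iso_extend P Q hP hQ hiso heX heY (by rw [hle, hle'])
      · intro x hx
        exact Function.update_of_ne (fun hxe => heX (by rw [← hxe]; exact hx)) _ _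
    · intro a Y' htr
      obtain ⟨X', htrX, hRX'Y'⟩ := (hRstep X Y hRXY).2 a Y' htr
      obtain ⟨_, _, e', heY, hY', hle'⟩ := htr
      obtain ⟨e, heX, hX', hle⟩ := htrX.2.2
      refine ⟨X', Function.update f e e', htrX, ⟨hRX'Y', ?_⟩, ?_⟩
      · rw [hX', hY']
        exact iso_extend P Q hP hQ hiso heX heY (by rw [hle, hle'])
      · intro x hx
        exact Function.update_of_ne (fun hxe => heX (by rw [← hxe]; exact hx)) _ _
end

section
/- For coherence spaces, if two coherence spaces have the same set of sequential traces (interleaving trace equivalent) then they have the same set of step traces (step trace equivalent). -/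
/-!
In a coherence space every subset of a configuration is again a configuration, and any two
distinct events of a configuration are concurrent. Hence a step `X →ᵐ X'` is the same as
performing the events of `X' \ X` one at a time, in any order, and the step traces are exactly
the sequential traces cut into nonempty blocks, each block read as a multiset.
-/

namespace PES

variable {A : Type*} {P : PES A}

def Run (P : PES A) : Set P.E → List A → Set P.E → Prop
  | X, [], X' => X' = X ∧ P.Config X
  | X, a :: w, X'' => ∃ X', P.Trans X a X' ∧ P.Run X' w X''

theorem TraceFrom.config {X : Set P.E} {w : List A} (h : P.TraceFrom X w) : P.Config X := by
  cases w with
  | nil => exact h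
  | cons a w => obtain ⟨_, hT, _⟩ := h; exact hT.1

theorem traceFrom_append {u v : List A} {X : Set P.E} :
    P.TraceFrom X (u ++ v) ↔ ∃ Y, P.Run X u Y ∧ P.TraceFrom Y v := by
  induction u generalizing X with
  | nil =>
    exact ⟨fun h => ⟨X, ⟨rfl, h.config⟩, h⟩, fun ⟨_, ⟨hY, _⟩, h⟩ => hY ▸ h⟩
  | cons a u ih =>
    simp only [List.cons_append, TraceFrom, Run, ih]
    exact ⟨fun ⟨X₁, hT, Y, hr, ht⟩ => ⟨Y, ⟨X₁, hT, hr⟩, ht⟩,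
      fun ⟨Y, ⟨X₁, hT, hr⟩, ht⟩ => ⟨X₁, hT, Y, hr, ht⟩⟩

theorem Config.subset (hP : P.IsCS) {X Y : Set P.E} (hX : P.Config X) (hYX : Y ⊆ X) :
    P.Config Y :=
  ⟨hX.1.subset hYX, fun e he e' he' => hX.2.1 e (hYX he) e' (hYX he'),
    fun e he e' hle => hP e' e hle ▸ he⟩

theorem Config.co (hP : P.IsCS) {X : Set P.E} (hX : P.Config X) {e e' : P.E} (he : e ∈ X)
    (he' : e' ∈ X) (hne : e ≠ e') : P.co e e' :=
  ⟨fun hle => hne (hP _ _ hle), fun hle => hne (hP _ _ hle).symm, hX.2.1 e he e' he'⟩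

theorem run_iff_of_isCS [DecidableEq P.E] (hP : P.IsCS) {w : List A} {X X' : Set P.E} :
    P.Run X w X' ↔ P.Config X' ∧ X ⊆ X' ∧
      ∃ l : List P.E, l.Nodup ∧ ↑l.toFinset = X' \ X ∧ l.map P.lab = w := by
  constructor
  · induction w generalizing X with
    | nil =>
      rintro ⟨rfl, hC⟩
      exact ⟨hC, subset_rfl, [], List.nodup_nil, by simp, rfl⟩
    | cons a w ih =>
      rintro ⟨_, ⟨-, -, e, heX, rfl, rfl⟩, hr⟩
      obtain ⟨hC', hsub, l, hnd, hl, rfl⟩ := ih hr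
      have he : e ∈ X' := hsub (Set.mem_insert e X)
      have hel : e ∉ l := fun hm => (hl ▸ List.mem_toFinset.mpr hm : e ∈ X' \ insert e X).2
        (Set.mem_insert e X)
      refine ⟨hC', (Set.subset_insert e X).trans hsub, e :: l, List.nodup_cons.mpr ⟨hel, hnd⟩,
        ?_, rfl⟩
      rw [List.toFinset_cons, Finset.coe_insert, hl]
      grind
  · rintro ⟨hC', hsub, l, hnd, hl, rfl⟩
    induction l generalizing X with
    | nil =>
      have : X' = X := (Set.sdiff_eq_empty.mp (by simpa using hl.symm)).antisymm hsub
      exact ⟨this, this ▸ hC'⟩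
    | cons e l ih =>
      have he : e ∈ X' \ X := hl ▸ by simp
      have hsub' : insert e X ⊆ X' := Set.insert_subset he.1 hsub
      refine ⟨insert e X, ⟨hC'.subset hP hsub, hC'.subset hP hsub', e, he.2, rfl, rfl⟩,
        ih hsub' hnd.of_cons ?_⟩
      have hel : e ∉ l := (List.nodup_cons.mp hnd).1
      rw [List.toFinset_cons, Finset.coe_insert, Set.ext_iff] at hl
      ext x
      have := hl x
      simp only [Set.mem_insert_iff, Finset.mem_coe, List.mem_toFinset, Set.mem_sdiff] at this ⊢
      grind

theorem stepTrans_iff_of_isCS (hP : P.IsCS) {m : Multiset A} {X X' : Set P.E} :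
    P.StepTrans X m X' ↔ ∃ w : List A, w ≠ [] ∧ (w : Multiset A) = m ∧ P.Run X w X' := by
  classical
  simp only [StepTrans, run_iff_of_isCS hP]
  constructor
  · rintro ⟨-, hC', hsub, G, hG, hne, -, rfl⟩
    refine ⟨G.toList.map P.lab, by simpa using hne.ne_empty, ?_, hC', hsub, G.toList,
      G.nodup_toList, by rw [Finset.toList_toFinset, hG], rfl⟩
    rw [← Multiset.map_coe, Finset.coe_toList]
  · rintro ⟨w, hw, rfl, hC', hsub, l, hnd, hl, rfl⟩
    have mem_new {e : P.E} (he : e ∈ l.toFinset) : e ∈ X' := (hl ▸ Finset.mem_coe.mpr he).1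
    refine ⟨hC'.subset hP hsub, hC', hsub, l.toFinset, hl, by simpa using hw,
      fun e he e' he' => hC'.co hP (mem_new he) (mem_new he'), ?_⟩
    rw [List.toFinset_val, hnd.dedup, Multiset.map_coe]

theorem stepTraceFrom_iff_of_isCS (hP : P.IsCS) {s : List (Multiset A)} {X : Set P.E} :
    P.StepTraceFrom X s ↔ ∃ ws : List (List A), (∀ w ∈ ws, w ≠ []) ∧
      ws.map (↑) = s ∧ P.TraceFrom X ws.flatten := by
  induction s generalizing X with
  | nil =>
    refine ⟨fun h => ⟨[], by simp, rfl, h⟩, ?_⟩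
    rintro ⟨ws, -, hws, h⟩
    rw [List.map_eq_nil_iff.mp hws] at h
    exact h
  | cons m s ih =>
    simp only [StepTraceFrom, stepTrans_iff_of_isCS hP, ih]
    constructor
    · rintro ⟨X', ⟨w, hw, rfl, hr⟩, ws, hws, rfl, ht⟩
      exact ⟨w :: ws, by simpa [hw] using hws, rfl, traceFrom_append.mpr ⟨X', hr, ht⟩⟩
    · rintro ⟨_ | ⟨w, ws⟩, hws, hmap, ht⟩
      · cases hmap
      · obtain ⟨rfl, rfl⟩ := List.cons_eq_cons.mp hmap
        obtain ⟨X', hr, ht⟩ := traceFrom_append.mp ht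
        exact ⟨X', ⟨w, hws w List.mem_cons_self, rfl, hr⟩,
          ws, fun v hv => hws v (List.mem_cons_of_mem w hv), rfl, ht⟩

end PES

theorem cs_it_implies_st {A : Type*} (P Q : PES A) (hP : P.IsCS) (hQ : Q.IsCS)
    (h : PES.ITrEq P Q) : PES.STrEq P Q := by
  intro s
  rw [PES.StTr, PES.StTr, PES.stepTraceFrom_iff_of_isCS hP, PES.stepTraceFrom_iff_of_isCS hQ]
  exact exists_congr fun ws => and_congr_right fun _ => and_congr_right fun _ => h ws.flatten
end

section
/- For finite elementary event structures, weak history preserving bisimilarity implies isomorphism. -/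
/-!
Because `E` is finite, any configuration related by `R` can be extended one minimal missing
event at a time until it is all of `E`; matching these moves in `F` gives `R E Y`. Then `Y = F`,
since any further move of `Y` would have to be matched by a move of `E`, which has none. The
isomorphism of the pomsets `E` and `F` carried by `R E F` is an isomorphism of the event
structures, conflict being empty on both sides.
-/

namespace PES

open Set

variable {A : Type*}

abbrev toPartialOrder (P : PES A) : PartialOrder P.E where
  le := P.le
  le_refl := P.le_refl
  le_trans := P.le_trans
  le_antisymm := P.le_antisymm

lemma Config.empty (P : PES A) : P.Config ∅ :=
  ⟨finite_empty, by simp, by simp⟩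

lemma Config.insert_of_isEES {P : PES A} (hP : P.IsEES) {X : Set P.E} (hX : P.Config X)
    {e : P.E} (hpast : ∀ e', P.le e' e → e' = e ∨ e' ∈ X) : P.Config (insert e X) := by
  refine ⟨hX.1.insert e, fun a _ b _ => hP a b, ?_⟩
  rintro a (rfl | ha) e' hle
  · exact hpast e' hle
  · exact mem_insert_of_mem e (hX.2.2 a ha e' hle)

lemma exists_minimal_not_mem (P : PES A) [Finite P.E] {X : Set P.E} (hX : X ≠ univ) :
    ∃ e ∉ X, ∀ e', P.le e' e → e' = e ∨ e' ∈ X := by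
  let _ := P.toPartialOrder
  obtain ⟨e, he⟩ := Xᶜ.toFinite.exists_minimal (nonempty_compl.2 hX)
  refine ⟨e, he.prop, fun e' hle => ?_⟩
  by_contra! h
  exact h.1 (P.le_antisymm _ _ hle (he.2 h.2 hle))

lemma exists_trans_insert_of_ne_univ {P : PES A} [Finite P.E] (hP : P.IsEES) {X : Set P.E}
    (hX : P.Config X) (hne : X ≠ univ) : ∃ e ∉ X, P.Trans X (P.lab e) (insert e X) := by
  obtain ⟨e, heX, hpast⟩ := P.exists_minimal_not_mem hne
  exact ⟨e, heX, hX, hX.insert_of_isEES hP hpast, e, heX, rfl, rfl⟩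

lemma not_trans_univ (P : PES A) {a : A} {X' : Set P.E} : ¬ P.Trans univ a X' :=
  fun ⟨_, _, e, he, _⟩ => he (mem_univ e)

namespace WHBisim

variable {P Q : PES A} {R : Set P.E → Set Q.E → Prop}

lemma exists_rel_univ [Finite P.E] (hP : P.IsEES) (hR : WHBisim P Q R) {X : Set P.E}
    {Y : Set Q.E} (hX : P.Config X) (hY : Q.Config Y) (hXY : R X Y) :
    ∃ Y', Q.Config Y' ∧ R univ Y' := by
  induction X using WellFoundedGT.induction generalizing Y with
  | _ X ih =>
    by_cases hne : X = univ
    · exact ⟨Y, hY, hne ▸ hXY⟩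
    obtain ⟨e, heX, hXe⟩ := exists_trans_insert_of_ne_univ hP hX hne
    obtain ⟨Y', hYY', hR'⟩ := (hR.2 X Y hXY).2.1 _ _ hXe
    exact ih _ (ssubset_insert heX) hXe.2.1 hYY'.2.1 hR'

lemma eq_univ_of_rel_univ [Finite Q.E] (hQ : Q.IsEES) (hR : WHBisim P Q R) {Y : Set Q.E}
    (hY : Q.Config Y) (h : R univ Y) : Y = univ := by
  by_contra hne
  obtain ⟨e, -, hYe⟩ := exists_trans_insert_of_ne_univ hQ hY hne
  obtain ⟨X', hX', -⟩ := (hR.2 _ _ h).2.2 _ _ hYe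
  exact P.not_trans_univ hX'

end WHBisim

lemma iso_of_pIso_univ {P Q : PES A} (hP : P.IsEES) (hQ : Q.IsEES)
    (h : PIso P Q univ univ) : Iso P Q := by
  obtain ⟨f, hbij, hle, hlab⟩ := h
  refine ⟨Equiv.ofBijective f (bijOn_univ.mp hbij), fun e e' => ?_,
    fun e e' => iff_of_false (hP e e') (hQ _ _), fun e => hlab e (mem_univ e)⟩
  exact hle e (mem_univ e) e' (mem_univ e')

end PES

theorem finite_ees_whb_implies_iso {A : Type*} (P Q : PES A)
    (hP : P.IsEES) (hQ : Q.IsEES) (hPfin : Finite P.E) (hQfin : Finite Q.E)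
    (h : PES.WHBisimilar P Q) : PES.Iso P Q := by
  obtain ⟨R, hR⟩ := h
  obtain ⟨Y, hY, hRY⟩ :=
    hR.exists_rel_univ hP (PES.Config.empty P) (PES.Config.empty Q) hR.1
  obtain rfl := hR.eq_univ_of_rel_univ hQ hY hRY
  exact PES.iso_of_pIso_univ hP hQ (hR.2 _ _ hRY).1
end
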